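/- Let V₁,…,V_m be real n×n symmetric positive definite matrices and y ∈ ℝⁿ with y ≠ 0. For σ² with nonnegative entries, σ² ≠ 0, let Ω(σ²) = Σᵢ σᵢ² Vᵢ, and define the MM map M by (M(σ²))ᵢ = σᵢ²·√( (yᵀΩ(σ²)⁻¹VᵢΩ(σ²)⁻¹y) / tr(Ω(σ²)⁻¹Vᵢ) ), with (M(σ²))ᵢ = 0 when σᵢ² = 0. Let σ²⁽⁰⁾ have all entries strictly positive and define σ²⁽ᵗ⁺¹⁾ = M(σ²⁽ᵗ⁾). Then the distance between successive iterates converges to zero: ‖σ²⁽ᵗ⁺¹⁾ − σ²⁽ᵗ⁾‖₂ → 0 as t → ∞. -/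

import Mathlib

open Matrix

/-- The covariance matrix `Ω(σ²) = ∑ i, σᵢ² Vᵢ`. -/
noncomputable def covMat {m n : ℕ} (V : Fin m → Matrix (Fin n) (Fin n) ℝ)
    (s : Fin m → ℝ) : Matrix (Fin n) (Fin n) ℝ :=
  ∑ i, s i • V i

/-- The MM map `(M(σ²))ᵢ = σᵢ² √( (yᵀΩ⁻¹VᵢΩ⁻¹y) / tr(Ω⁻¹Vᵢ) )` (which is `0` whenever
`σᵢ² = 0`). -/
noncomputable def mmMap {m n : ℕ} (V : Fin m → Matrix (Fin n) (Fin n) ℝ)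
    (y : Fin n → ℝ) (s : Fin m → ℝ) : Fin m → ℝ := fun i =>
  s i * Real.sqrt ((y ⬝ᵥ ((covMat V s)⁻¹ * V i * (covMat V s)⁻¹) *ᵥ y) /
    ((covMat V s)⁻¹ * V i).trace)

/-!
The MM iteration is an ascent method for `logLik σ² = -log det Ω - yᵀΩ⁻¹y`. Majorizing `log det` by
its tangent plane and `yᵀΩ⁻¹y` by AM–GM in each `Vᵢ`-inner product shows that one step gains at
least `∑ᵢ (bᵢ / σᵢ²) (M(σ²)ᵢ - σᵢ²)²`, where `bᵢ = tr(Ω⁻¹Vᵢ)`. The likelihood is bounded above, so the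
gains tend to zero. Monotonicity of the likelihood also bounds the iterates above, and then the
Loewner antitonicity of `Ω ↦ Ω⁻¹` bounds `bᵢ / σᵢ²` below, so the steps themselves tend to zero.
-/

open scoped MatrixOrder
open Filter Topology

namespace Matrix
variable {n : Type*} [Fintype n] {A B : Matrix n n ℝ}

lemma IsHermitian.dotProduct_mulVec_comm (hA : A.IsHermitian) (u z : n → ℝ) :
    u ⬝ᵥ A *ᵥ z = z ⬝ᵥ A *ᵥ u := by
  rw [dotProduct_mulVec, ← mulVec_transpose, ← conjTranspose_eq_transpose_of_trivial, hA.eq,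
    dotProduct_comm]

lemma PosSemidef.two_mul_dotProduct_mulVec_le (hA : A.PosSemidef) {t : ℝ} (ht : 0 < t)
    (u z : n → ℝ) :
    2 * (u ⬝ᵥ A *ᵥ z) ≤ t * (u ⬝ᵥ A *ᵥ u) + t⁻¹ * (z ⬝ᵥ A *ᵥ z) := by
  have h := hA.dotProduct_mulVec_nonneg (t • u - z)
  simp only [star_trivial, mulVec_sub, mulVec_smul, dotProduct_sub, sub_dotProduct,
    dotProduct_smul, smul_dotProduct, smul_eq_mul, hA.isHermitian.dotProduct_mulVec_comm z u] at h
  have key : 0 ≤ t * (t * (u ⬝ᵥ A *ᵥ u) + t⁻¹ * (z ⬝ᵥ A *ᵥ z) - 2 * (u ⬝ᵥ A *ᵥ z)) := by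
    field_simp
    linarith
  linarith [(mul_nonneg_iff_of_pos_left ht).mp key]

variable [DecidableEq n]

lemma trace_mul_eq_trace_sqrt_mul_mul_sqrt (A : Matrix n n ℝ) (hB : B.PosSemidef) :
    (A * B).trace = (star (CFC.sqrt B) * A * CFC.sqrt B).trace := by
  rw [(CFC.sqrt_nonneg B).isSelfAdjoint.star_eq, trace_mul_comm (CFC.sqrt B * A), ← mul_assoc,
    CFC.sqrt_mul_sqrt_self B hB.nonneg, trace_mul_comm]

lemma PosSemidef.trace_mul_nonneg (hA : A.PosSemidef) (hB : B.PosSemidef) :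
    0 ≤ (A * B).trace := by
  rw [trace_mul_eq_trace_sqrt_mul_mul_sqrt A hB]
  exact (hA.conjTranspose_mul_mul_same _).trace_nonneg

lemma PosDef.trace_mul_pos [Nonempty n] (hA : A.PosDef) (hB : B.PosDef) :
    0 < (A * B).trace := by
  rw [trace_mul_eq_trace_sqrt_mul_mul_sqrt A hB.posSemidef]
  have hC : IsUnit (CFC.sqrt B) :=
    CFC.isUnit_sqrt_iff_isStrictlyPositive.mpr hB.isStrictlyPositive
  exact ((IsUnit.posDef_star_left_conjugate_iff hC).mpr hA).trace_pos

lemma PosDef.log_det_le_trace_sub_card (hA : A.PosDef) :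
    Real.log A.det ≤ A.trace - Fintype.card n := by
  have hev := hA.eigenvalues_pos
  simp only [hA.isHermitian.det_eq_prod_eigenvalues, hA.isHermitian.trace_eq_sum_eigenvalues,
    RCLike.ofReal_real_eq_id, id, Real.log_prod fun j _ => (hev j).ne']
  rw [← Finset.card_univ, ← nsmul_one, ← Finset.sum_const, ← Finset.sum_sub_distrib]
  exact Finset.sum_le_sum fun j _ => Real.log_le_sub_one_of_pos (hev j)

/-- The tangent-line bound for the concave function `log det`. -/
lemma PosDef.log_det_le_log_det_add_trace_inv_mul_sub_card (hA : A.PosDef) (hB : B.PosDef) :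
    Real.log B.det ≤ Real.log A.det + (A⁻¹ * B).trace - Fintype.card n := by
  have hC : IsUnit (CFC.sqrt B) :=
    CFC.isUnit_sqrt_iff_isStrictlyPositive.mpr hB.isStrictlyPositive
  have hdet : (star (CFC.sqrt B) * A⁻¹ * CFC.sqrt B).det = B.det * A.det⁻¹ := by
    rw [(CFC.sqrt_nonneg B).isSelfAdjoint.star_eq, det_mul, det_mul, mul_right_comm, ← det_mul,
      CFC.sqrt_mul_sqrt_self B hB.posSemidef.nonneg, det_nonsing_inv, Ring.inverse_eq_inv']
  have key := ((IsUnit.posDef_star_left_conjugate_iff hC).mpr hA.inv).log_det_le_trace_sub_card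
  rw [← trace_mul_eq_trace_sqrt_mul_mul_sqrt _ hB.posSemidef, hdet,
    Real.log_mul hB.det_pos.ne' (inv_ne_zero hA.det_pos.ne'), Real.log_inv] at key
  linarith

end Matrix

section covMat
variable {m n : ℕ} (V : Fin m → Matrix (Fin n) (Fin n) ℝ)

lemma dotProduct_covMat_mulVec (s : Fin m → ℝ) (x z : Fin n → ℝ) :
    x ⬝ᵥ covMat V s *ᵥ z = ∑ i, s i * (x ⬝ᵥ V i *ᵥ z) := by
  simp [covMat, sum_mulVec, smul_mulVec, dotProduct_sum]

lemma trace_mul_covMat (A : Matrix (Fin n) (Fin n) ℝ) (s : Fin m → ℝ) :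
    (A * covMat V s).trace = ∑ i, s i * (A * V i).trace := by
  simp [covMat, Matrix.mul_sum, trace_sum]

lemma covMat_smul (c : ℝ) (s : Fin m → ℝ) : covMat V (c • s) = c • covMat V s := by
  simp [covMat, Finset.smul_sum, smul_smul]

lemma inv_covMat_smul {c : ℝ} (hc : c ≠ 0) {s : Fin m → ℝ} (hs : IsUnit (covMat V s).det) :
    (covMat V (c • s))⁻¹ = c⁻¹ • (covMat V s)⁻¹ := by
  rw [covMat_smul]
  exact inv_smul' _ (Units.mk0 c hc) hs

lemma covMat_isHermitian (hV : ∀ i, (V i).IsHermitian) (s : Fin m → ℝ) :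
    (covMat V s).IsHermitian :=
  isSelfAdjoint_sum _ fun i _ => (hV i).smul (IsSelfAdjoint.all (s i))

lemma covMat_posDef [NeZero m] (hV : ∀ i, (V i).PosDef) {s : Fin m → ℝ} (hs : ∀ i, 0 < s i) :
    (covMat V s).PosDef :=
  posDef_sum Finset.univ_nonempty fun i _ => (hV i).smul (hs i)

end covMat

section mm
variable {m n : ℕ} (V : Fin m → Matrix (Fin n) (Fin n) ℝ) (y : Fin n → ℝ)

noncomputable def mmNumer (s : Fin m → ℝ) (i : Fin m) : ℝ :=
  ((covMat V s)⁻¹ *ᵥ y) ⬝ᵥ V i *ᵥ ((covMat V s)⁻¹ *ᵥ y)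

noncomputable def mmDenom (s : Fin m → ℝ) (i : Fin m) : ℝ :=
  ((covMat V s)⁻¹ * V i).trace

/-- Twice the Gaussian log-likelihood of `y ∼ N(0, Ω(σ²))`, up to an additive constant. -/
noncomputable def logLik (s : Fin m → ℝ) : ℝ :=
  -Real.log (covMat V s).det - y ⬝ᵥ (covMat V s)⁻¹ *ᵥ y

lemma mmMap_apply (hV : ∀ i, (V i).IsHermitian) (s : Fin m → ℝ) (i : Fin m) :
    mmMap V y s i = s i * √(mmNumer V y s i / mmDenom V s i) := by
  rw [mmMap, mmNumer, mmDenom, mul_assoc, ← mulVec_mulVec, ← mulVec_mulVec,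
    (covMat_isHermitian V hV s).inv.dotProduct_mulVec_comm, dotProduct_comm]

variable [NeZero m] {V} (hV : ∀ i, (V i).PosDef) {s : Fin m → ℝ} (hs : ∀ i, 0 < s i)
include hV hs

lemma covMat_mulVec_inv_mulVec : covMat V s *ᵥ ((covMat V s)⁻¹ *ᵥ y) = y := by
  rw [mulVec_mulVec, mul_nonsing_inv _ (covMat_posDef V hV hs).det_pos.ne'.isUnit, one_mulVec]

lemma mmNumer_pos (hy : y ≠ 0) (i : Fin m) : 0 < mmNumer V y s i := by
  have hz : (covMat V s)⁻¹ *ᵥ y ≠ 0 := fun hz => hy <| by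
    rw [← covMat_mulVec_inv_mulVec y hV hs, hz, mulVec_zero]
  exact (hV i).dotProduct_mulVec_pos hz

lemma mmDenom_pos [NeZero n] (i : Fin m) : 0 < mmDenom V s i :=
  (covMat_posDef V hV hs).inv.trace_mul_pos (hV i)

lemma sum_mul_mmNumer : ∑ i, s i * mmNumer V y s i = y ⬝ᵥ (covMat V s)⁻¹ *ᵥ y := by
  unfold mmNumer
  rw [← dotProduct_covMat_mulVec, covMat_mulVec_inv_mulVec y hV hs, dotProduct_comm]

lemma sum_mul_mmDenom : ∑ i, s i * mmDenom V s i = n := by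
  unfold mmDenom
  rw [← trace_mul_covMat, nonsing_inv_mul _ (covMat_posDef V hV hs).det_pos.ne'.isUnit, trace_one,
    Fintype.card_fin]

lemma mmMap_pos (hy : y ≠ 0) [NeZero n] (i : Fin m) : 0 < mmMap V y s i := by
  rw [mmMap_apply V y fun i => (hV i).isHermitian]
  exact mul_pos (hs i)
    (Real.sqrt_pos.mpr (div_pos (mmNumer_pos y hV hs hy i) (mmDenom_pos hV hs i)))

end mm

/-- `s * √(a / b)` is the MM update of `s`. -/
lemma mm_gain_eq {s a b : ℝ} (hs : 0 < s) (ha : 0 < a) (hb : 0 < b) :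
    s * a + s * b - s * √(a / b) * b - s ^ 2 / (s * √(a / b)) * a =
      b / s * (s * √(a / b) - s) ^ 2 := by
  have hr : 0 < √(a / b) := Real.sqrt_pos.mpr (div_pos ha hb)
  have hr2 : √(a / b) ^ 2 * b = a := by
    rw [Real.sq_sqrt (div_pos ha hb).le, div_mul_cancel₀ a hb.ne']
  field_simp
  linear_combination (1 - √(a / b)) * hr2

lemma neg_mul_log_sub_div_le {c q x : ℝ} (hc : 0 < c) (hq : 0 < q) (hx : 0 < x) :
    -c * Real.log x - q / x ≤ c * Real.log (c / q) - c := by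
  have h := Real.log_le_sub_one_of_pos (show 0 < q / (c * x) by positivity)
  rw [Real.log_div hq.ne' (by positivity), Real.log_mul hc.ne' hx.ne'] at h
  have h' := mul_le_mul_of_nonneg_left h hc.le
  rw [show c * (q / (c * x) - 1) = q / x - c by field_simp] at h'
  rw [Real.log_div hc.ne' hq.ne']
  linarith

section surrogate
variable {m n : ℕ} [NeZero m] {V : Fin m → Matrix (Fin n) (Fin n) ℝ} (hV : ∀ i, (V i).PosDef)
  {s s' : Fin m → ℝ} (hs : ∀ i, 0 < s i)
include hV hs

/-- A majorizer of the convex function `s' ↦ yᵀΩ(s')⁻¹y`, tight at `s' = s`. -/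
lemma dotProduct_inv_covMat_mulVec_le (hs' : ∀ i, 0 < s' i) (y : Fin n → ℝ) :
    y ⬝ᵥ (covMat V s')⁻¹ *ᵥ y ≤ ∑ i, s i ^ 2 / s' i * mmNumer V y s i := by
  set z := (covMat V s)⁻¹ *ᵥ y
  set u := (covMat V s')⁻¹ *ᵥ y
  have hpt : ∀ i, 2 * (s i * (u ⬝ᵥ V i *ᵥ z)) ≤
      s' i * (u ⬝ᵥ V i *ᵥ u) + s i ^ 2 / s' i * mmNumer V y s i := fun i => by
    have h := (hV i).posSemidef.two_mul_dotProduct_mulVec_le (div_pos (hs' i) (hs i)) u z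
    have h' := mul_le_mul_of_nonneg_left h (hs i).le
    rw [show s i * (s' i / s i * (u ⬝ᵥ V i *ᵥ u) + (s' i / s i)⁻¹ * (z ⬝ᵥ V i *ᵥ z)) =
      s' i * (u ⬝ᵥ V i *ᵥ u) + s i ^ 2 / s' i * (z ⬝ᵥ V i *ᵥ z) by
        field_simp [(hs i).ne', (hs' i).ne']] at h'
    unfold mmNumer
    linarith
  have hsum := Finset.sum_le_sum fun i (_ : i ∈ Finset.univ) => hpt i
  rw [← Finset.mul_sum, Finset.sum_add_distrib, ← dotProduct_covMat_mulVec,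
    ← dotProduct_covMat_mulVec, covMat_mulVec_inv_mulVec y hV hs,
    covMat_mulVec_inv_mulVec y hV hs'] at hsum
  rw [dotProduct_comm]
  linarith

lemma dotProduct_inv_covMat_mulVec_antitone (hss' : s ≤ s') (y : Fin n → ℝ) :
    y ⬝ᵥ (covMat V s')⁻¹ *ᵥ y ≤ y ⬝ᵥ (covMat V s)⁻¹ *ᵥ y := by
  have hs' i : 0 < s' i := (hs i).trans_le (hss' i)
  calc y ⬝ᵥ (covMat V s')⁻¹ *ᵥ y ≤ ∑ i, s i ^ 2 / s' i * mmNumer V y s i :=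
        dotProduct_inv_covMat_mulVec_le hV hs hs' y
    _ ≤ ∑ i, s i * mmNumer V y s i := by
        refine Finset.sum_le_sum fun i _ => mul_le_mul_of_nonneg_right ?_
          ((hV i).posSemidef.dotProduct_mulVec_nonneg _)
        rw [div_le_iff₀ (hs' i), sq]
        exact mul_le_mul_of_nonneg_left (hss' i) (hs i).le
    _ = y ⬝ᵥ (covMat V s)⁻¹ *ᵥ y := sum_mul_mmNumer y hV hs

lemma inv_covMat_antitone (hss' : s ≤ s') : (covMat V s')⁻¹ ≤ (covMat V s)⁻¹ := by
  have hs' i : 0 < s' i := (hs i).trans_le (hss' i)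
  refine PosSemidef.of_dotProduct_mulVec_nonneg
    ((covMat_posDef V hV hs).inv.isHermitian.sub (covMat_posDef V hV hs').inv.isHermitian)
    fun x => ?_
  simpa [sub_mulVec, dotProduct_sub] using dotProduct_inv_covMat_mulVec_antitone hV hs hss' x

lemma mmDenom_antitone (hss' : s ≤ s') (i : Fin m) : mmDenom V s' i ≤ mmDenom V s i := by
  have h := (le_iff.mp (inv_covMat_antitone hV hs hss')).trace_mul_nonneg (hV i).posSemidef
  rwa [sub_mul, trace_sub, sub_nonneg] at h

lemma log_det_covMat_le (hs' : ∀ i, 0 < s' i) :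
    Real.log (covMat V s').det ≤ Real.log (covMat V s).det + ∑ i, s' i * mmDenom V s i - n := by
  have h := (covMat_posDef V hV hs).log_det_le_log_det_add_trace_inv_mul_sub_card
    (covMat_posDef V hV hs')
  rwa [trace_mul_covMat, Fintype.card_fin] at h

lemma log_det_le_log_det_covMat (i : Fin m) :
    n * Real.log (s i) + Real.log (V i).det ≤ Real.log (covMat V s).det := by
  have h := (covMat_posDef V hV hs).log_det_le_log_det_add_trace_inv_mul_sub_card
    ((hV i).smul (hs i))
  rw [det_smul, Fintype.card_fin, Real.log_mul (pow_ne_zero _ (hs i).ne') (hV i).det_pos.ne',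
    Real.log_pow, Matrix.mul_smul, trace_smul, smul_eq_mul] at h
  have hle : s i * mmDenom V s i ≤ n := by
    rw [← sum_mul_mmDenom hV hs]
    exact Finset.single_le_sum (f := fun j => s j * mmDenom V s j)
      (fun j _ => mul_nonneg (hs j).le
        ((covMat_posDef V hV hs).inv.posSemidef.trace_mul_nonneg (hV j).posSemidef))
      (Finset.mem_univ i)
  unfold mmDenom at hle
  linarith

end surrogate

section logLik
variable {m n : ℕ} [NeZero m] {V : Fin m → Matrix (Fin n) (Fin n) ℝ} (hV : ∀ i, (V i).PosDef)
  {y : Fin n → ℝ}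
include hV

lemma logLik_add_le_logLik_mmMap [NeZero n] (hy : y ≠ 0) {s : Fin m → ℝ} (hs : ∀ i, 0 < s i) :
    logLik V y s + ∑ i, mmDenom V s i / s i * (mmMap V y s i - s i) ^ 2 ≤
      logLik V y (mmMap V y s) := by
  have hs' := mmMap_pos y hV hs hy
  have hgain i : mmDenom V s i / s i * (mmMap V y s i - s i) ^ 2 =
      s i * mmNumer V y s i + s i * mmDenom V s i - mmMap V y s i * mmDenom V s i -
        s i ^ 2 / mmMap V y s i * mmNumer V y s i := by
    rw [mmMap_apply V y fun i => (hV i).isHermitian]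
    exact (mm_gain_eq (hs i) (mmNumer_pos y hV hs hy i) (mmDenom_pos hV hs i)).symm
  have h1 := log_det_covMat_le hV hs hs'
  have h2 := dotProduct_inv_covMat_mulVec_le hV hs hs' y
  simp only [logLik, hgain, Finset.sum_sub_distrib, Finset.sum_add_distrib,
    sum_mul_mmNumer y hV hs, sum_mul_mmDenom hV hs]
  linarith

lemma logLik_le {s : Fin m → ℝ} (hs : ∀ i, 0 < s i) (i : Fin m) :
    logLik V y s ≤ -n * Real.log (s i) - Real.log (V i).det := by
  have h := log_det_le_log_det_covMat hV hs i
  have hq := (covMat_posDef V hV hs).inv.posSemidef.dotProduct_mulVec_nonneg y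
  unfold logLik
  simp only [star_trivial] at hq
  linarith

/-- The quadratic term keeps the likelihood down when all `sᵢ` are small, the log-determinant
when one of them is large. -/
lemma exists_logLik_le [NeZero n] (hy : y ≠ 0) :
    ∃ K, ∀ s : Fin m → ℝ, (∀ i, 0 < s i) → logLik V y s ≤ K := by
  have hΩ₁ := covMat_posDef V hV (s := 1) fun _ => one_pos
  set q := y ⬝ᵥ (covMat V 1)⁻¹ *ᵥ y
  have hq : 0 < q := hΩ₁.inv.dotProduct_mulVec_pos hy
  have hn : (0 : ℝ) < n := Nat.cast_pos.mpr (NeZero.pos n)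
  obtain ⟨i₁, hi₁⟩ := Finite.exists_min fun i => Real.log (V i).det
  refine ⟨n * Real.log (n / q) - n - Real.log (V i₁).det, fun s hs => ?_⟩
  obtain ⟨i₀, hi₀⟩ := Finite.exists_max s
  have hquad : q / s i₀ ≤ y ⬝ᵥ (covMat V s)⁻¹ *ᵥ y := by
    have h := dotProduct_inv_covMat_mulVec_antitone hV hs (s' := s i₀ • 1)
      (fun i => by simpa using hi₀ i) y
    rwa [inv_covMat_smul V (hs i₀).ne' hΩ₁.det_pos.ne'.isUnit,
      smul_mulVec, dotProduct_smul, smul_eq_mul, inv_mul_eq_div] at h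
  have h := log_det_le_log_det_covMat hV hs i₀
  have hreal := neg_mul_log_sub_div_le hn hq (hs i₀)
  unfold logLik
  linarith [hi₁ i₀]

end logLik

section iterates
variable {m n : ℕ} [NeZero m] [NeZero n] {V : Fin m → Matrix (Fin n) (Fin n) ℝ}
  (hV : ∀ i, (V i).PosDef) {y : Fin n → ℝ} (hy : y ≠ 0) {s : ℕ → Fin m → ℝ}
  (h0 : ∀ i, 0 < s 0 i) (hrec : ∀ t, s (t + 1) = mmMap V y (s t))
include hV hy h0 hrec

lemma mmIterate_pos (t : ℕ) (i : Fin m) : 0 < s t i := by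
  induction t generalizing i with
  | zero => exact h0 i
  | succ t ih => rw [hrec]; exact mmMap_pos y hV ih hy i

lemma logLik_mmIterate_add_le (t : ℕ) :
    logLik V y (s t) + ∑ i, mmDenom V (s t) i / s t i * (s (t + 1) i - s t i) ^ 2 ≤
      logLik V y (s (t + 1)) := by
  rw [hrec]
  exact logLik_add_le_logLik_mmMap hV hy (mmIterate_pos hV hy h0 hrec t)

lemma monotone_logLik_mmIterate : Monotone fun t => logLik V y (s t) := by
  refine monotone_nat_of_le_succ fun t => le_trans ?_ (logLik_mmIterate_add_le hV hy h0 hrec t)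
  have hst := mmIterate_pos hV hy h0 hrec t
  exact le_add_of_nonneg_right (Finset.sum_nonneg fun i _ =>
    mul_nonneg (div_nonneg (mmDenom_pos hV hst i).le (hst i).le) (sq_nonneg _))

lemma exists_mmIterate_le : ∃ R, ∀ t i, s t i ≤ R := by
  have hn : (0 : ℝ) < n := Nat.cast_pos.mpr (NeZero.pos n)
  set bound := fun i => Real.exp ((-logLik V y (s 0) - Real.log (V i).det) / n)
  have hle t i : s t i ≤ bound i := by
    have h := (monotone_logLik_mmIterate hV hy h0 hrec (Nat.zero_le t)).trans
      (logLik_le hV (mmIterate_pos hV hy h0 hrec t) i)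
    rw [← Real.log_le_iff_le_exp (mmIterate_pos hV hy h0 hrec t i), le_div_iff₀ hn]
    linarith
  obtain ⟨R, hR⟩ := (Set.finite_range bound).bddAbove
  exact ⟨R, fun t i => (hle t i).trans (hR ⟨i, rfl⟩)⟩

lemma exists_pos_le_mmDenom_div_mmIterate :
    ∃ κ > 0, ∀ t i, κ ≤ mmDenom V (s t) i / s t i := by
  obtain ⟨R, hR⟩ := exists_mmIterate_le hV hy h0 hrec
  have hR0 : 0 < R := (h0 0).trans_le (hR 0 0)
  have hΩ₁ := covMat_posDef V hV (s := 1) fun _ => one_pos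
  obtain ⟨i₁, hi₁⟩ := Finite.exists_min (mmDenom V 1)
  have hb₁ := mmDenom_pos hV (s := 1) (fun _ => one_pos) i₁
  refine ⟨R⁻¹ * mmDenom V 1 i₁ / R, by positivity, fun t i => ?_⟩
  have hst := mmIterate_pos hV hy h0 hrec t
  have hscale : mmDenom V (R • 1) i = R⁻¹ * mmDenom V 1 i := by
    rw [mmDenom, inv_covMat_smul V hR0.ne' hΩ₁.det_pos.ne'.isUnit, smul_mul, trace_smul,
      smul_eq_mul, mmDenom]
  have hdenom := mmDenom_antitone hV hst (s' := R • 1)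
    (fun j => by simpa using hR t j) i
  calc R⁻¹ * mmDenom V 1 i₁ / R ≤ R⁻¹ * mmDenom V 1 i / R := by gcongr; exact hi₁ i
    _ ≤ mmDenom V (s t) i / R := by rw [← hscale]; gcongr
    _ ≤ mmDenom V (s t) i / s t i :=
        div_le_div_of_nonneg_left (mmDenom_pos hV hst i).le (hst i) (hR t i)

lemma exists_sum_sq_mmIterate_sub_le : ∃ C, ∀ t, ∑ i, (s (t + 1) i - s t i) ^ 2 ≤
    C * (logLik V y (s (t + 1)) - logLik V y (s t)) := by
  obtain ⟨κ, hκ, hκle⟩ := exists_pos_le_mmDenom_div_mmIterate hV hy h0 hrec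
  refine ⟨κ⁻¹, fun t => ?_⟩
  rw [le_inv_mul_iff₀ hκ, Finset.mul_sum]
  refine le_sub_iff_add_le'.mpr (le_trans ?_ (logLik_mmIterate_add_le hV hy h0 hrec t))
  gcongr with i
  exact hκle t i

end iterates

lemma tendsto_succ_sub_of_monotone_of_bddAbove {f : ℕ → ℝ} (hf : Monotone f)
    (hb : BddAbove (Set.range f)) : Tendsto (fun t => f (t + 1) - f t) atTop (𝓝 0) := by
  have h := tendsto_atTop_ciSup hf hb
  simpa using (h.comp (tendsto_add_atTop_nat 1)).sub h

/-- the Euclidean distance between successive MM iterates converges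
to zero. -/
theorem mm_successive_iterates_dist_tendsto_zero (m n : ℕ)
    (V : Fin m → Matrix (Fin n) (Fin n) ℝ) (hV : ∀ i, (V i).PosDef)
    (y : Fin n → ℝ) (hy : y ≠ 0) (s : ℕ → Fin m → ℝ)
    (h0 : ∀ i, 0 < s 0 i) (hrec : ∀ t, s (t + 1) = mmMap V y (s t)) :
    Filter.Tendsto (fun t => Real.sqrt (∑ i, (s (t + 1) i - s t i) ^ 2))
      Filter.atTop (nhds 0) := by
  rcases Nat.eq_zero_or_pos m with rfl | hm
  · simp
  have : NeZero m := ⟨hm.ne'⟩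
  have : NeZero n := ⟨by rintro rfl; exact hy (Subsingleton.elim _ _)⟩
  obtain ⟨C, hC⟩ := exists_sum_sq_mmIterate_sub_le hV hy h0 hrec
  obtain ⟨K, hK⟩ := exists_logLik_le hV hy
  have hgain := tendsto_succ_sub_of_monotone_of_bddAbove (monotone_logLik_mmIterate hV hy h0 hrec)
    ⟨K, Set.forall_mem_range.mpr fun t => hK _ (mmIterate_pos hV hy h0 hrec t)⟩
  have hsq : Tendsto (fun t => ∑ i, (s (t + 1) i - s t i) ^ 2) atTop (𝓝 0) :=
    squeeze_zero (fun t => Finset.sum_nonneg fun i _ => sq_nonneg _) hC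
      (by simpa using hgain.const_mul C)
  simpa using hsq.sqrt
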